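/- arXiv:2012.10032 — 3 statements merged into one kernel-verified Lean document; each statement's English description precedes it below -/
import Mathlib

section
/- Any population classifier φ that minimizes the misclassification probability Pr(φ(X) ≠ Y) over all measurable classifiers also minimizes the clustering error min_Π Pr(φ(X) ≠ Π(Y)), where the minimum is over all permutations Π of the K labels; in particular the Bayes rule φ^{Bayes}(x) = argmax_k π_k f_k(x) attains the minimal clustering error. -/
open MeasureTheory

/-- Any classifier `φ` that minimizes the misclassification probability
`Pr(φ(X) ≠ Y)` over all measurable classifiers also minimizes the clustering error
`min_Π Pr(φ(X) ≠ Π(Y))`, where the minimum is over all permutations `Π` of the `K`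
labels; in particular the Bayes rule (which minimizes misclassification) attains the
minimal clustering error. -/
theorem misclassification_minimizer_minimizes_clustering_error
    {Ω E : Type*} [MeasurableSpace Ω] [MeasurableSpace E] {K : ℕ}
    (P : Measure Ω) [IsProbabilityMeasure P]
    (X : Ω → E) (Y : Ω → Fin K)
    (φ : E → Fin K) (hφ : Measurable φ)
    (hopt : ∀ ψ : E → Fin K, Measurable ψ →
      P {ω | φ (X ω) ≠ Y ω} ≤ P {ω | ψ (X ω) ≠ Y ω}) :
    ∀ ψ : E → Fin K, Measurable ψ →
      (⨅ Perm : Equiv.Perm (Fin K), P {ω | φ (X ω) ≠ Perm (Y ω)}) ≤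
        ⨅ Perm : Equiv.Perm (Fin K), P {ω | ψ (X ω) ≠ Perm (Y ω)} := by
  intro ψ hψ
  refine le_iInf fun π => ?_
  calc (⨅ Perm : Equiv.Perm (Fin K), P {ω | φ (X ω) ≠ Perm (Y ω)})
      ≤ P {ω | φ (X ω) ≠ (1 : Equiv.Perm (Fin K)) (Y ω)} := iInf_le _ 1
    _ = P {ω | φ (X ω) ≠ Y ω} := rfl
    _ ≤ P {ω | (π.symm ∘ ψ) (X ω) ≠ Y ω} :=
        hopt (π.symm ∘ ψ) ((measurable_of_countable _).comp hψ)
    _ = P {ω | ψ (X ω) ≠ π (Y ω)} := by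
        congr 1
        ext ω
        simp [Function.comp_apply, Equiv.symm_apply_eq]
end

section
/- If X ~ N(m, V) with V = Σ_M ⊗ ... ⊗ Σ_1 and X is reshaped into a tensor, then E[(X − m)_{(m)} (X − m)_{(m)}^T] = (tr(⊗_{h≠m} Σ_h)) Σ_m = q_m c Σ_m, where (·)_{(m)} is mode-m matricization, q_m = ∏_{h≠m} p_h, and c = (∏_{h≠m} tr(Σ_h))/q_m; in particular E[(X−m)_{(m)}(X−m)_{(m)}^T] is proportional to Σ_m. -/
/-!
Entrywise, `(X - m)_(m₀) (X - m)_(m₀)ᵀ` at `(a, b)` sums the covariances of `vec X` between the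
multi-indices `(a, c)` and `(b, c)` over all `c`; it is thus a partial trace of the covariance
`Σ_M ⊗ ⋯ ⊗ Σ_1`. Each entry of the Kronecker product factors as
`Σ_{m₀} a b * ∏_{h ≠ m₀} Σ_h (c h) (c h)`, and summing the second factor over `c` expands the product
of traces `∏_{h ≠ m₀} tr Σ_h`.
-/

open Matrix BigOperators Finset MeasureTheory

/-- The Kronecker product `Σ_M ⊗ ⋯ ⊗ Σ_1` of a family of square matrices, realized as a
matrix indexed by multi-indices. -/
noncomputable def kronFamily {M : ℕ} {p : Fin M → ℕ}
    (S : ∀ m, Matrix (Fin (p m)) (Fin (p m)) ℝ) :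
    Matrix (∀ m, Fin (p m)) (∀ m, Fin (p m)) ℝ :=
  Matrix.of fun i j => ∏ m, S m (i m) (j m)

/-- The full multi-index obtained by placing `a` at mode `m₀` and `c` elsewhere; used to
express the mode-`m₀` matricization of a tensor: `A_(m₀) (a, c) = A (mergeIdx m₀ a c)`. -/
def mergeIdx {M : ℕ} {p : Fin M → ℕ} (m₀ : Fin M) (a : Fin (p m₀))
    (c : ∀ h : {h : Fin M // h ≠ m₀}, Fin (p h.1)) : ∀ h, Fin (p h) :=
  fun h => if hh : h = m₀ then Fin.cast (congrArg p hh).symm a else c ⟨h, hh⟩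

section MergeIdx

variable {M : ℕ} {p : Fin M → ℕ} (m₀ : Fin M) (a : Fin (p m₀))
  (c : ∀ h : {h : Fin M // h ≠ m₀}, Fin (p h.1))

@[simp]
lemma mergeIdx_self : mergeIdx m₀ a c m₀ = a := by
  simp [mergeIdx]

@[simp]
lemma mergeIdx_of_ne (h : {h : Fin M // h ≠ m₀}) : mergeIdx m₀ a c h.1 = c h := by
  simp [mergeIdx, h.2]

end MergeIdx

lemma prod_trace_eq_sum_prod_diag {R ι : Type*} [CommSemiring R] [Fintype ι] [DecidableEq ι]
    {n : ι → Type*} [∀ i, Fintype (n i)] (S : ∀ i, Matrix (n i) (n i) R) :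
    ∏ i, (S i).trace = ∑ c : ∀ i, n i, ∏ i, S i (c i) (c i) :=
  Fintype.prod_sum _

lemma kronFamily_mergeIdx_apply {M : ℕ} {p : Fin M → ℕ}
    (S : ∀ m, Matrix (Fin (p m)) (Fin (p m)) ℝ) (m₀ : Fin M) (a b : Fin (p m₀))
    (c c' : ∀ h : {h : Fin M // h ≠ m₀}, Fin (p h.1)) :
    kronFamily S (mergeIdx m₀ a c) (mergeIdx m₀ b c') =
      S m₀ a b * ∏ h : {h : Fin M // h ≠ m₀}, S h.1 (c h) (c' h) := by
  rw [kronFamily, of_apply, Fintype.prod_eq_mul_prod_subtype_ne _ m₀]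
  simp

lemma sum_kronFamily_mergeIdx {M : ℕ} {p : Fin M → ℕ}
    (S : ∀ m, Matrix (Fin (p m)) (Fin (p m)) ℝ) (m₀ : Fin M) (a b : Fin (p m₀)) :
    ∑ c : ∀ h : {h : Fin M // h ≠ m₀}, Fin (p h.1),
        kronFamily S (mergeIdx m₀ a c) (mergeIdx m₀ b c) =
      (∏ h ∈ univ.erase m₀, (S h).trace) * S m₀ a b := by
  rw [prod_subtype (univ.erase m₀) (p := (· ≠ m₀)) (by simp), prod_trace_eq_sum_prod_diag,
    sum_mul]
  simp only [kronFamily_mergeIdx_apply, mul_comm]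

theorem mode_matricization_second_moment_general {M : ℕ} {p : Fin M → ℕ}
    {Ω : Type*} [MeasurableSpace Ω] (P : Measure Ω)
    (X : Ω → (∀ m, Fin (p m)) → ℝ) (m : (∀ m, Fin (p m)) → ℝ)
    (S : ∀ m, Matrix (Fin (p m)) (Fin (p m)) ℝ)
    (hcov : ∀ J J' : ∀ m, Fin (p m),
      ∫ ω, (X ω J - m J) * (X ω J' - m J') ∂P = kronFamily S J J')
    (m₀ : Fin M) (a b : Fin (p m₀)) :
    (∑ c : ∀ h : {h : Fin M // h ≠ m₀}, Fin (p h.1),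
        ∫ ω, (X ω (mergeIdx m₀ a c) - m (mergeIdx m₀ a c)) *
          (X ω (mergeIdx m₀ b c) - m (mergeIdx m₀ b c)) ∂P) =
      (∏ h ∈ Finset.univ.erase m₀, (S h).trace) * S m₀ a b := by
  simp only [hcov]
  exact sum_kronFamily_mergeIdx S m₀ a b

/-- If the tensor-valued random variable `X` has mean `m` and Kronecker-separable
covariance `Cov(vec X) = Σ_M ⊗ ⋯ ⊗ Σ_1` (as holds when `vec X ~ N(vec m, Σ_M ⊗ ⋯ ⊗ Σ_1)`),
then `E[(X - m)_(m₀) (X - m)_(m₀)ᵀ] = (∏_{h ≠ m₀} tr Σ_h) Σ_{m₀}`; in particular this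
second-moment matrix is proportional to `Σ_{m₀}`. -/
theorem mode_matricization_second_moment {M : ℕ} {p : Fin M → ℕ}
    {Ω : Type*} [MeasurableSpace Ω] (P : Measure Ω) [IsProbabilityMeasure P]
    (X : Ω → (∀ m, Fin (p m)) → ℝ) (m : (∀ m, Fin (p m)) → ℝ)
    (S : ∀ m, Matrix (Fin (p m)) (Fin (p m)) ℝ)
    (hcov : ∀ J J' : ∀ m, Fin (p m),
      ∫ ω, (X ω J - m J) * (X ω J' - m J') ∂P = kronFamily S J J')
    (m₀ : Fin M) (a b : Fin (p m₀)) :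
    (∑ c : ∀ h : {h : Fin M // h ≠ m₀}, Fin (p h.1),
        ∫ ω, (X ω (mergeIdx m₀ a c) - m (mergeIdx m₀ a c)) *
          (X ω (mergeIdx m₀ b c) - m (mergeIdx m₀ b c)) ∂P) =
      (∏ h ∈ Finset.univ.erase m₀, (S h).trace) * S m₀ a b :=
  mode_matricization_second_moment_general P X m S hcov m₀ a b
end

section
/- In a two-component Gaussian mixture with common positive definite covariance V, a coordinate j of x does not affect the Bayes classification rule if and only if the j-th entry of β* = V^{-1}(m_2 − m_1) is zero; in particular, a coordinate with m_{1,j} = m_{2,j} may still affect the optimal rule when V is non-diagonal, and a coordinate with m_{1,j} ≠ m_{2,j} may be irrelevant. -/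
open Matrix BigOperators Finset

lemma aux_posdef : (!![1, 1/2; 1/2, 1] : Matrix (Fin 2) (Fin 2) ℝ).PosDef := by
  rw [Matrix.posDef_iff_dotProduct_mulVec]
  constructor
  · ext i j
    fin_cases i <;> fin_cases j <;> simp [Matrix.conjTranspose_apply]
  · intro x hx
    have hx' : x 0 ≠ 0 ∨ x 1 ≠ 0 := by
      by_contra h
      push_neg at h
      exact hx (funext fun i => by fin_cases i <;> simp [h.1, h.2])
    simp only [Matrix.mulVec, dotProduct, Fin.sum_univ_two,
      Pi.star_apply, star_trivial, RCLike.ofReal_re]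
    norm_num [Matrix.cons_val_zero, Matrix.cons_val_one, Matrix.head_cons]
    rcases hx' with h | h <;> nlinarith [sq_nonneg (x 0 + x 1), mul_self_pos.mpr h]

lemma aux_inv : (!![1, 1/2; 1/2, 1] : Matrix (Fin 2) (Fin 2) ℝ)⁻¹ =
    !![4/3, -2/3; -2/3, 4/3] := by
  apply Matrix.inv_eq_right_inv
  ext i j
  fin_cases i <;> fin_cases j <;>
    norm_num [Matrix.mul_apply, Fin.sum_univ_two]

/-- In a two-component Gaussian mixture with common positive definite covariance `V`,
a coordinate `j` does not affect the Bayes rule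
(`assign to class 2 iff log(π_2/π_1) + ⟨x - (m_1+m_2)/2, β*⟩ > 0`, i.e. the rule's output
is invariant to the value of `x_j`) if and only if `β*_j = (V⁻¹ (m_2 - m_1))_j = 0`.
In particular, a coordinate with equal means (`(m_2 - m_1)_j = 0`) may still have
`β*_j ≠ 0` (and hence affect the optimal rule) when `V` is non-diagonal, and a coordinate
with unequal means may have `β*_j = 0` (and hence be irrelevant). -/
theorem coordinate_relevance {ι : Type*} [Fintype ι] [DecidableEq ι]
    (V : Matrix ι ι ℝ) (hV : V.PosDef)
    (m₁ m₂ : ι → ℝ) (π₁ π₂ : ℝ) (hπ₁ : 0 < π₁) (hπ₂ : 0 < π₂) (hπ : π₁ + π₂ = 1)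
    (j : ι) :
    ((∀ (x : ι → ℝ) (t : ℝ),
        ((0 : ℝ) < Real.log (π₂ / π₁) +
            (Function.update x j t - (1 / 2 : ℝ) • (m₁ + m₂)) ⬝ᵥ (V⁻¹ *ᵥ (m₂ - m₁)) ↔
          (0 : ℝ) < Real.log (π₂ / π₁) +
            (x - (1 / 2 : ℝ) • (m₁ + m₂)) ⬝ᵥ (V⁻¹ *ᵥ (m₂ - m₁)))) ↔
      (V⁻¹ *ᵥ (m₂ - m₁)) j = 0) ∧
    (∃ (V' : Matrix (Fin 2) (Fin 2) ℝ) (d : Fin 2 → ℝ),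
      V'.PosDef ∧ d 1 = 0 ∧ (V'⁻¹ *ᵥ d) 1 ≠ 0) ∧
    (∃ (V' : Matrix (Fin 2) (Fin 2) ℝ) (d : Fin 2 → ℝ),
      V'.PosDef ∧ d 1 ≠ 0 ∧ (V'⁻¹ *ᵥ d) 1 = 0) := by
  set β := V⁻¹ *ᵥ (m₂ - m₁) with hβ
  set c := (1 / 2 : ℝ) • (m₁ + m₂) with hc
  set L := Real.log (π₂ / π₁) with hL
  have key : ∀ (x : ι → ℝ) (t : ℝ),
      (Function.update x j t - c) ⬝ᵥ β = (x - c) ⬝ᵥ β + (t - x j) * β j := by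
    intro x t
    have h1 : Function.update x j t - c = (x - c) + Pi.single j (t - x j) := by
      funext i
      by_cases h : i = j
      · subst h; simp [Function.update_self]
      · simp [Function.update_of_ne h, Pi.single_eq_of_ne h]
    rw [h1, add_dotProduct, single_dotProduct]
  refine ⟨⟨fun h => ?_, fun h x t => ?_⟩, ?_, ?_⟩
  · by_contra hβj
    have h1 := h c (c j + (1 - L) / β j)
    have h2 := h c (c j + (-1 - L) / β j)
    rw [key] at h1 h2
    have hcc : (c - c) ⬝ᵥ β = 0 := by simp
    rw [hcc] at h1 h2
    have e1 : (c j + (1 - L) / β j - c j) * β j = 1 - L := by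
      field_simp
      ring
    have e2 : (c j + (-1 - L) / β j - c j) * β j = -1 - L := by
      field_simp
      ring
    rw [e1] at h1
    rw [e2] at h2
    have hL1 : (0:ℝ) < L + 0 := h1.mp (by linarith)
    have hL2 := h2.mpr hL1
    linarith
  · rw [key, h]
    ring_nf
  · refine ⟨!![1, 1/2; 1/2, 1], ![1, 0], aux_posdef, rfl, ?_⟩
    rw [aux_inv]
    norm_num [Matrix.mulVec, dotProduct, Fin.sum_univ_two]
  · refine ⟨!![1, 1/2; 1/2, 1], ![1, 1/2], aux_posdef, by norm_num, ?_⟩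
    rw [aux_inv]
    norm_num [Matrix.mulVec, dotProduct, Fin.sum_univ_two]
end
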